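/- Let u ∈ A_{2n}(4312) and define g(u) = min{2n+1, u_i : ∃ i < j < k with u_j < u_k < u_i}. For positive integers v_1, v_2, the permutation w = v_1 ↦ (v_2 ↦ u) of {1,...,2n+2} is a 4312-avoiding alternating permutation if and only if 1 ≤ v_1 ≤ v_2 and u_1 + 1 ≤ v_2 ≤ g(u). -/

import Mathlib

/-- `u` is a permutation of `{1,...,m}`, given as the word `u 0, u 1, ..., u (m-1)`. -/
def IsPermOn (m : ℕ) (u : Fin m → ℕ) : Prop :=
  Function.Injective u ∧ ∀ i, u i ∈ Finset.Icc 1 m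

/-- up-down (alternating): u 0 < u 1 > u 2 < u 3 > ... -/
def UpDown (m : ℕ) (u : Fin m → ℕ) : Prop :=
  ∀ i : ℕ, ∀ h : i + 1 < m,
    (i % 2 = 0 → u ⟨i, by omega⟩ < u ⟨i + 1, h⟩) ∧
    (i % 2 = 1 → u ⟨i + 1, h⟩ < u ⟨i, by omega⟩)

/-- down-up: u 0 > u 1 < u 2 > u 3 < ... -/
def DownUp (m : ℕ) (u : Fin m → ℕ) : Prop :=
  ∀ i : ℕ, ∀ h : i + 1 < m,
    (i % 2 = 0 → u ⟨i + 1, h⟩ < u ⟨i, by omega⟩) ∧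
    (i % 2 = 1 → u ⟨i, by omega⟩ < u ⟨i + 1, h⟩)

/-- `u` contains the pattern `σ`. -/
def Contains {m k : ℕ} (u : Fin m → ℕ) (σ : Fin k → ℕ) : Prop :=
  ∃ g : Fin k → Fin m, StrictMono g ∧ ∀ a b : Fin k, u (g a) < u (g b) ↔ σ a < σ b

def Avoids {m k : ℕ} (u : Fin m → ℕ) (σ : Fin k → ℕ) : Prop := ¬ Contains u σ

/-- The set `A_m(σ)` of σ-avoiding up-down alternating permutations of `{1,...,m}`. -/
def AvoidSet (m : ℕ) {k : ℕ} (σ : Fin k → ℕ) : Set (Fin m → ℕ) :=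
  {u | IsPermOn m u ∧ UpDown m u ∧ Avoids u σ}

def p1234 : Fin 4 → ℕ := ![1, 2, 3, 4]
def p1243 : Fin 4 → ℕ := ![1, 2, 4, 3]
def p2143 : Fin 4 → ℕ := ![2, 1, 4, 3]
def p4312 : Fin 4 → ℕ := ![4, 3, 1, 2]
def p3412 : Fin 4 → ℕ := ![3, 4, 1, 2]

/-- `f(u)`: max over 0 and the smaller entries of 21-patterns of `u`. -/
noncomputable def fval {m : ℕ} (u : Fin m → ℕ) : ℕ :=
  sSup ({0} ∪ {x | ∃ i j : Fin m, i < j ∧ u j < u i ∧ x = u j})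

/-- `e(u)`: max over 0 and the smallest entries of 132-patterns of `u`. -/
noncomputable def eval' {m : ℕ} (u : Fin m → ℕ) : ℕ :=
  sSup ({0} ∪ {x | ∃ i j k : Fin m, i < j ∧ j < k ∧ u i < u k ∧ u k < u j ∧ x = u i})

/-- `g(u)`: min over m+1 and the largest entries of 312-patterns of `u`. -/
noncomputable def gval {m : ℕ} (u : Fin m → ℕ) : ℕ :=
  sInf ({m + 1} ∪ {x | ∃ i j k : Fin m, i < j ∧ j < k ∧ u j < u k ∧ u k < u i ∧ x = u i})

/-- `h(u)`: min over m+1 and the larger entries of 12-patterns of `u`. -/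
noncomputable def hval {m : ℕ} (u : Fin m → ℕ) : ℕ :=
  sInf ({m + 1} ∪ {x | ∃ i j : Fin m, i < j ∧ u i < u j ∧ x = u j})

/-- the operation `v ↦ u`: prepend `v`, increasing every entry `≥ v` by 1. -/
def ins {m : ℕ} (v : ℕ) (u : Fin m → ℕ) : Fin (m + 1) → ℕ :=
  Fin.cases v (fun j => if u j < v then u j else u j + 1)

/-- standardization of a word with distinct entries. -/
def stWord {k : ℕ} (r : Fin k → ℕ) : Fin k → ℕ :=
  fun j => (Finset.univ.filter (fun i => r i ≤ r j)).card

/-! If `v₁ ≤ v₂`, the word `v₁ ↦ (v₂ ↦ u)` is `v₁, v₂ + 1` followed by an order-isomorphic copy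
of `u`, so it is up-down exactly when `u` is and `u₁ < v₂`. A 4312 that is not already in `u`
uses one of the two new letters as its `4`; the other three letters then form a 312 of `u` whose
top lies below `v₁ ≤ v₂` or below `v₂`. Such a 312 exists exactly when `g(u) < v₂`. -/

/-- The ℕ-analogue of `Fin.succAbove`. -/
def succAboveNat (v x : ℕ) : ℕ := if x < v then x else x + 1

lemma succAboveNat_strictMono (v : ℕ) : StrictMono (succAboveNat v) := by
  intro x y h; unfold succAboveNat; split_ifs <;> omega

lemma succAboveNat_ne (v x : ℕ) : succAboveNat v x ≠ v := by
  unfold succAboveNat; split_ifs <;> omega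

lemma succAboveNat_lt_iff_of_le {v a x : ℕ} (h : a ≤ v) : succAboveNat v x < a ↔ x < a := by
  unfold succAboveNat; split_ifs <;> omega

lemma lt_succAboveNat_self_iff {v x : ℕ} : v < succAboveNat v x ↔ v ≤ x := by
  unfold succAboveNat; split_ifs <;> omega

lemma succAboveNat_mem_Icc_iff {m v x : ℕ} (hv : v ∈ Finset.Icc 1 (m + 1)) :
    succAboveNat v x ∈ Finset.Icc 1 (m + 1) ↔ x ∈ Finset.Icc 1 m := by
  simp only [Finset.mem_Icc] at hv ⊢
  unfold succAboveNat; split_ifs <;> omega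

lemma ins_eq_cons {m : ℕ} (v : ℕ) (u : Fin m → ℕ) :
    ins v u = Fin.cons v (succAboveNat v ∘ u) := rfl

lemma isPermOn_ins_iff {m v : ℕ} {u : Fin m → ℕ} :
    IsPermOn (m + 1) (ins v u) ↔ v ∈ Finset.Icc 1 (m + 1) ∧ IsPermOn m u := by
  have hv : v ∉ Set.range (succAboveNat v ∘ u) := fun ⟨i, hi⟩ => succAboveNat_ne v (u i) hi
  simp only [IsPermOn, ins_eq_cons, Fin.cons_injective_iff, hv, not_false_eq_true, true_and,
    (succAboveNat_strictMono v).injective.of_comp_iff, Fin.forall_fin_succ, Fin.cons_zero,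
    Fin.cons_succ, Function.comp_apply]
  constructor
  · rintro ⟨hinj, hv, hmem⟩
    exact ⟨hv, hinj, fun i => (succAboveNat_mem_Icc_iff hv).1 (hmem i)⟩
  · rintro ⟨hv, hinj, hmem⟩
    exact ⟨hinj, hv, fun i => (succAboveNat_mem_Icc_iff hv).2 (hmem i)⟩

lemma upDown_comp_iff {m : ℕ} {f : ℕ → ℕ} (hf : StrictMono f) {x : Fin m → ℕ} :
    UpDown m (f ∘ x) ↔ UpDown m x := by
  simp only [UpDown, Function.comp_apply, hf.lt_iff_lt]

lemma downUp_comp_iff {m : ℕ} {f : ℕ → ℕ} (hf : StrictMono f) {x : Fin m → ℕ} :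
    DownUp m (f ∘ x) ↔ DownUp m x := by
  simp only [DownUp, Function.comp_apply, hf.lt_iff_lt]

lemma upDown_cons_iff {m a : ℕ} {x : Fin m → ℕ} :
    UpDown (m + 1) (Fin.cons a x) ↔ (∀ h : 0 < m, a < x ⟨0, h⟩) ∧ DownUp m x := by
  constructor
  · intro H
    refine ⟨fun h => (H 0 (Nat.succ_lt_succ h)).1 rfl,
      fun i h => ⟨fun hi => ?_, fun hi => ?_⟩⟩
    · exact (H (i + 1) (by omega)).2 (by omega)
    · exact (H (i + 1) (by omega)).1 (by omega)
  · rintro ⟨h0, H⟩ (_ | i) h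
    · exact ⟨fun _ => h0 (by omega), by omega⟩
    · exact ⟨fun hi => (H i (by omega)).2 (by omega), fun hi => (H i (by omega)).1 (by omega)⟩

lemma downUp_cons_iff {m a : ℕ} {x : Fin m → ℕ} :
    DownUp (m + 1) (Fin.cons a x) ↔ (∀ h : 0 < m, x ⟨0, h⟩ < a) ∧ UpDown m x := by
  constructor
  · intro H
    refine ⟨fun h => (H 0 (Nat.succ_lt_succ h)).1 rfl,
      fun i h => ⟨fun hi => ?_, fun hi => ?_⟩⟩
    · exact (H (i + 1) (by omega)).2 (by omega)
    · exact (H (i + 1) (by omega)).1 (by omega)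
  · rintro ⟨h0, H⟩ (_ | i) h
    · exact ⟨fun _ => h0 (by omega), by omega⟩
    · exact ⟨fun hi => (H i (by omega)).2 (by omega), fun hi => (H i (by omega)).1 (by omega)⟩

lemma upDown_ins_ins_iff {m a b : ℕ} {u : Fin m → ℕ} (hm : 0 < m) :
    UpDown (m + 1 + 1) (ins a (ins b u)) ↔ a ≤ b ∧ u ⟨0, hm⟩ < b ∧ UpDown m u := by
  rw [ins_eq_cons, upDown_cons_iff, downUp_comp_iff (succAboveNat_strictMono a), ins_eq_cons,
    downUp_cons_iff, upDown_comp_iff (succAboveNat_strictMono b)]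
  simp only [hm, m.succ_pos, forall_true_left, Fin.zero_eta, Function.comp_apply, Fin.cons_zero,
    lt_succAboveNat_self_iff, succAboveNat_lt_iff_of_le le_rfl]

lemma contains_p4312_iff {M : ℕ} {w : Fin M → ℕ} :
    Contains w p4312 ↔ ∃ i j k l : Fin M, i < j ∧ j < k ∧ k < l ∧
      w k < w l ∧ w l < w j ∧ w j < w i := by
  constructor
  · rintro ⟨g, hg, hval⟩
    exact ⟨g 0, g 1, g 2, g 3, hg (by decide), hg (by decide), hg (by decide),
      (hval 2 3).2 (by simp [p4312]), (hval 3 1).2 (by simp [p4312]),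
      (hval 1 0).2 (by simp [p4312])⟩
  · rintro ⟨i, j, k, l, hij, hjk, hkl, h1, h2, h3⟩
    refine ⟨![i, j, k, l], ?_, ?_⟩
    · intro a b hab
      fin_cases a <;> fin_cases b <;> simp_all <;> omega
    · intro a b
      fin_cases a <;> fin_cases b <;> simp [p4312] <;> omega

lemma contains_comp_iff {m k : ℕ} {f : ℕ → ℕ} (hf : StrictMono f) {x : Fin m → ℕ}
    {σ : Fin k → ℕ} : Contains (f ∘ x) σ ↔ Contains x σ := by
  simp only [Contains, Function.comp_apply, hf.lt_iff_lt]

def Has312Below {m : ℕ} (x : Fin m → ℕ) (a : ℕ) : Prop :=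
  ∃ i j k : Fin m, i < j ∧ j < k ∧ x j < x k ∧ x k < x i ∧ x i < a

lemma Has312Below.mono {m a b : ℕ} {x : Fin m → ℕ} (h : Has312Below x a) (hab : a ≤ b) :
    Has312Below x b :=
  let ⟨i, j, k, hij, hjk, h1, h2, h3⟩ := h
  ⟨i, j, k, hij, hjk, h1, h2, h3.trans_le hab⟩

lemma has312Below_succAboveNat_comp_iff {m a v : ℕ} {x : Fin m → ℕ} (h : a ≤ v) :
    Has312Below (succAboveNat v ∘ x) a ↔ Has312Below x a := by
  simp only [Has312Below, Function.comp_apply, (succAboveNat_strictMono v).lt_iff_lt,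
    succAboveNat_lt_iff_of_le h]

lemma has312Below_cons_iff_of_le {m a b : ℕ} {x : Fin m → ℕ} (hab : a ≤ b) :
    Has312Below (Fin.cons b x : Fin (m + 1) → ℕ) a ↔ Has312Below x a := by
  simp only [Has312Below, Fin.exists_fin_succ, Fin.cons_zero, Fin.cons_succ,
    Fin.succ_lt_succ_iff, Fin.not_lt_zero, Fin.succ_pos, not_lt.2 hab, false_and, and_false,
    exists_false, false_or]

lemma contains_p4312_cons_iff {m a : ℕ} {x : Fin m → ℕ} :
    Contains (Fin.cons a x : Fin (m + 1) → ℕ) p4312 ↔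
      Contains x p4312 ∨ Has312Below x a := by
  simp only [contains_p4312_iff, Has312Below, Fin.exists_fin_succ, Fin.cons_zero, Fin.cons_succ,
    Fin.succ_lt_succ_iff, Fin.not_lt_zero, Fin.succ_pos, true_and, false_and, and_false,
    exists_false, false_or]
  exact or_comm

lemma contains_p4312_ins_ins_iff {m a b : ℕ} {u : Fin m → ℕ} (hab : a ≤ b) :
    Contains (ins a (ins b u)) p4312 ↔ Contains u p4312 ∨ Has312Below u b := by
  rw [ins_eq_cons, contains_p4312_cons_iff, contains_comp_iff (succAboveNat_strictMono a),
    has312Below_succAboveNat_comp_iff le_rfl, ins_eq_cons, contains_p4312_cons_iff,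
    has312Below_cons_iff_of_le hab, contains_comp_iff (succAboveNat_strictMono b),
    has312Below_succAboveNat_comp_iff le_rfl, has312Below_succAboveNat_comp_iff hab]
  exact or_iff_left_of_imp fun h => Or.inr (h.mono hab)

lemma le_gval_iff {m v : ℕ} {u : Fin m → ℕ} :
    v ≤ gval u ↔ v ≤ m + 1 ∧ ¬ Has312Below u v := by
  rw [gval, le_csInf_iff (OrderBot.bddBelow _) ⟨m + 1, Or.inl rfl⟩]
  simp only [Has312Below, Set.mem_union, Set.mem_singleton_iff, Set.mem_ofPred_eq, not_exists,
    not_and, not_lt]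
  constructor
  · intro h
    exact ⟨h _ (Or.inl rfl),
      fun i j k hij hjk h1 h2 => h _ (Or.inr ⟨i, j, k, hij, hjk, h1, h2, rfl⟩)⟩
  · rintro ⟨hm, h⟩ x (rfl | ⟨i, j, k, hij, hjk, h1, h2, rfl⟩)
    exacts [hm, h i j k hij hjk h1 h2]

theorem stmt12 (n : ℕ) (hn : 1 ≤ n) (u : Fin (2 * n) → ℕ) (hu : u ∈ AvoidSet (2 * n) p4312)
    (v1 v2 : ℕ) :
    ins v1 (ins v2 u) ∈ AvoidSet (2 * n + 1 + 1) p4312 ↔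
      1 ≤ v1 ∧ v1 ≤ v2 ∧ u ⟨0, by omega⟩ + 1 ≤ v2 ∧ v2 ≤ gval u := by
  obtain ⟨hperm, hud, havoid⟩ := hu
  have hn0 : 0 < 2 * n := by omega
  constructor
  · rintro ⟨hwperm, hwud, hwavoid⟩
    obtain ⟨hv1, hv2perm⟩ := isPermOn_ins_iff.1 hwperm
    obtain ⟨hv2, -⟩ := isPermOn_ins_iff.1 hv2perm
    obtain ⟨hv12, hu0, -⟩ := (upDown_ins_ins_iff hn0).1 hwud
    refine ⟨(Finset.mem_Icc.1 hv1).1, hv12, hu0,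
      le_gval_iff.2 ⟨(Finset.mem_Icc.1 hv2).2, fun h => hwavoid ?_⟩⟩
    exact (contains_p4312_ins_ins_iff hv12).2 (Or.inr h)
  · rintro ⟨hv1, hv12, hu0, hv2g⟩
    obtain ⟨hv2, hno312⟩ := le_gval_iff.1 hv2g
    refine ⟨isPermOn_ins_iff.2 ⟨?_, isPermOn_ins_iff.2 ⟨?_, hperm⟩⟩,
      (upDown_ins_ins_iff hn0).2 ⟨hv12, hu0, hud⟩, ?_⟩
    · exact Finset.mem_Icc.2 ⟨hv1, by omega⟩
    · exact Finset.mem_Icc.2 ⟨by omega, hv2⟩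
    · exact fun h => ((contains_p4312_ins_ins_iff hv12).1 h).elim havoid hno312
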